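/- Let α > 0, a > 0 and κ > 0. The following are equivalent: (i) there exists a nonzero bounded continuous function ψ : [0, ∞) → ℝ with ψ(0) = 0 which is twice differentiable at every x ∈ (0, ∞) with x ≠ a, satisfies ψ''(x) = κ²ψ(x) there, whose derivative has one-sided limits ψ'(a+0) and ψ'(a−0) at a, and which satisfies ψ'(a+0) − ψ'(a−0) = −αψ(a); (ii) αa > 1 and (α/2)·exp(−2κa) = α/2 − κ (so that necessarily κ ∈ (0, α/2)). -/

import Mathlib

/-!
On an interval avoiding `a`, a solution of `ψ'' = κ²ψ` is `c₁ e^{κx} + c₂ e^{-κx}`, since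
`e^{∓κx} (ψ' ± κψ)` has zero derivative. The Dirichlet condition forces `ψ = p (e^{κx} - e^{-κx})`
on `(0, a)` and boundedness forces `ψ = q e^{-κx}` on `(a, ∞)`. Continuity and the jump condition
at `a` then give a linear system in `(p, q)` which has a nonzero solution exactly when
`2κ e^{κa} = α (e^{κa} - e^{-κa})`, i.e. `(α/2) e^{-2κa} = α/2 - κ`; as
`0 < 1 - e^{-2κa} < 2κa`, this forces `αa > 1`.
-/

open Filter Topology Set Real

noncomputable def expComb (κ c₁ c₂ x : ℝ) : ℝ := c₁ * exp (κ * x) + c₂ * exp (-κ * x)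

lemma hasDerivAt_exp_const_mul (c x : ℝ) :
    HasDerivAt (fun y => exp (c * y)) (c * exp (c * x)) x := by
  simpa [mul_comm] using ((hasDerivAt_id x).const_mul c).exp

section expComb

variable (κ c₁ c₂ : ℝ)

lemma hasDerivAt_expComb (x : ℝ) :
    HasDerivAt (expComb κ c₁ c₂) (expComb κ (κ * c₁) (-(κ * c₂)) x) x := by
  refine (((hasDerivAt_exp_const_mul κ x).const_mul c₁).add
    ((hasDerivAt_exp_const_mul (-κ) x).const_mul c₂)).congr_deriv ?_
  unfold expComb
  ring

lemma deriv_expComb : deriv (expComb κ c₁ c₂) = expComb κ (κ * c₁) (-(κ * c₂)) :=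
  funext fun x => (hasDerivAt_expComb κ c₁ c₂ x).deriv

lemma continuous_expComb : Continuous (expComb κ c₁ c₂) := by
  unfold expComb
  fun_prop

end expComb

lemma eventuallyEq_expComb_solves {ψ : ℝ → ℝ} {κ c₁ c₂ x : ℝ}
    (hψ : ψ =ᶠ[𝓝 x] expComb κ c₁ c₂) :
    DifferentiableAt ℝ ψ x ∧ DifferentiableAt ℝ (deriv ψ) x ∧
      deriv (deriv ψ) x = κ ^ 2 * ψ x := by
  have hψ' : deriv ψ =ᶠ[𝓝 x] expComb κ (κ * c₁) (-(κ * c₂)) :=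
    deriv_expComb κ c₁ c₂ ▸ hψ.deriv
  refine ⟨hψ.differentiableAt_iff.2 (hasDerivAt_expComb κ c₁ c₂ x).differentiableAt,
    hψ'.differentiableAt_iff.2 (hasDerivAt_expComb _ _ _ x).differentiableAt, ?_⟩
  rw [hψ'.deriv_eq, deriv_expComb, hψ.eq_of_nhds, expComb, expComb]
  ring

section ODE

variable {κ : ℝ} {ψ : ℝ → ℝ} {s : Set ℝ}

lemma exists_deriv_add_mul_eq_mul_exp {σ : ℝ} (hσ : σ ^ 2 = κ ^ 2) (hs : IsOpen s)
    (hs' : IsPreconnected s)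
    (h : ∀ x ∈ s, DifferentiableAt ℝ ψ x ∧ DifferentiableAt ℝ (deriv ψ) x ∧
      deriv (deriv ψ) x = κ ^ 2 * ψ x) :
    ∃ A, ∀ x ∈ s, deriv ψ x + σ * ψ x = A * exp (σ * x) := by
  have hconst : ∀ x ∈ s,
      HasDerivAt (fun y => exp (-σ * y) * (deriv ψ y + σ * ψ y)) 0 x := by
    intro x hx
    obtain ⟨hψ, hψ', hψ''⟩ := h x hx
    refine ((hasDerivAt_exp_const_mul (-σ) x).mul
      (hψ'.hasDerivAt.add (hψ.hasDerivAt.const_mul σ))).congr_deriv ?_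
    rw [hψ'', Pi.add_apply]
    linear_combination -(exp (-σ * x) * ψ x) * hσ
  obtain ⟨A, hA⟩ := hs.exists_is_const_of_deriv_eq_zero hs'
    (fun x hx => (hconst x hx).differentiableAt.differentiableWithinAt)
    (fun x hx => (hconst x hx).deriv)
  refine ⟨A, fun x hx => ?_⟩
  have hinv : exp (-σ * x) * exp (σ * x) = 1 := by rw [← exp_add]; simp
  linear_combination exp (σ * x) * hA x hx - (deriv ψ x + σ * ψ x) * hinv

lemma exists_eqOn_expComb (hκ : κ ≠ 0) (hs : IsOpen s) (hs' : IsPreconnected s)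
    (h : ∀ x ∈ s, DifferentiableAt ℝ ψ x ∧ DifferentiableAt ℝ (deriv ψ) x ∧
      deriv (deriv ψ) x = κ ^ 2 * ψ x) :
    ∃ c₁ c₂, EqOn ψ (expComb κ c₁ c₂) s := by
  obtain ⟨A, hA⟩ := exists_deriv_add_mul_eq_mul_exp rfl hs hs' h
  obtain ⟨B, hB⟩ := exists_deriv_add_mul_eq_mul_exp (neg_sq κ) hs hs' h
  refine ⟨A / (2 * κ), -B / (2 * κ), fun x hx => ?_⟩
  have hBx := hB x hx
  simp only [expComb, neg_mul] at hBx ⊢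
  field_simp
  linear_combination hA x hx - hBx

end ODE

lemma eq_zero_of_eventually_abs_expComb_le {κ c₁ c₂ C : ℝ} (hκ : 0 < κ)
    (h : ∀ᶠ x in atTop, |expComb κ c₁ c₂ x| ≤ C) : c₁ = 0 := by
  have hdecay : Tendsto (fun x => exp (-κ * x)) atTop (𝓝 0) :=
    tendsto_exp_comp_nhds_zero.2 (tendsto_id.const_mul_atTop_of_neg (neg_lt_zero.2 hκ))
  have hscaled : ∀ x, expComb κ c₁ c₂ x * exp (-κ * x) = c₁ + c₂ * exp (-κ * x) ^ 2 := by
    intro x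
    rw [expComb, add_mul, mul_assoc, ← exp_add]
    ring_nf
    simp
  have hto_c₁ : Tendsto (fun x => expComb κ c₁ c₂ x * exp (-κ * x)) atTop (𝓝 c₁) := by
    simp_rw [hscaled]
    simpa using tendsto_const_nhds.add ((hdecay.pow 2).const_mul c₂)
  have hto_zero : Tendsto (fun x => expComb κ c₁ c₂ x * exp (-κ * x)) atTop (𝓝 0) := by
    refine squeeze_zero_norm' (a := fun x => C * exp (-κ * x)) (h.mono fun x hx => ?_)
      (by simpa using hdecay.const_mul C)
    rw [norm_mul, Real.norm_eq_abs, Real.norm_of_nonneg (exp_pos _).le]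
    exact mul_le_mul_of_nonneg_right hx (exp_pos _).le
  exact tendsto_nhds_unique hto_c₁ hto_zero

lemma tendsto_of_eqOn_of_continuousAt {X Y : Type*} [TopologicalSpace X] [TopologicalSpace Y]
    {f g : X → Y} {s : Set X} {l : Filter X} {x : X} (hl : l ≤ 𝓝 x) (hs : s ∈ l)
    (hfg : EqOn g f s) (hf : ContinuousAt f x) : Tendsto g l (𝓝 (f x)) :=
  (hf.tendsto.mono_left hl).congr' (hfg.eventuallyEq_of_mem hs).symm

lemma tendsto_deriv_of_eqOn_expComb {ψ : ℝ → ℝ} {κ c₁ c₂ x : ℝ} {s : Set ℝ} {l : Filter ℝ}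
    (hl : l ≤ 𝓝 x) (hs : IsOpen s) (hsl : s ∈ l) (hψ : EqOn ψ (expComb κ c₁ c₂) s) :
    Tendsto (deriv ψ) l (𝓝 (expComb κ (κ * c₁) (-(κ * c₂)) x)) :=
  tendsto_of_eqOn_of_continuousAt hl hsl (deriv_expComb κ c₁ c₂ ▸ hψ.deriv hs)
    (continuous_expComb _ _ _).continuousAt

def IsDeltaEigenfunction (α a κ : ℝ) (ψ : ℝ → ℝ) : Prop :=
  (∃ x : ℝ, 0 ≤ x ∧ ψ x ≠ 0) ∧
  ContinuousOn ψ (Set.Ici 0) ∧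
  ψ 0 = 0 ∧
  (∃ C : ℝ, ∀ x : ℝ, 0 ≤ x → |ψ x| ≤ C) ∧
  (∀ x : ℝ, 0 < x → x ≠ a →
    DifferentiableAt ℝ ψ x ∧ DifferentiableAt ℝ (deriv ψ) x ∧
    deriv (deriv ψ) x = κ ^ 2 * ψ x) ∧
  (∃ Lp Lm : ℝ,
    Tendsto (deriv ψ) (𝓝[>] a) (𝓝 Lp) ∧
    Tendsto (deriv ψ) (𝓝[<] a) (𝓝 Lm) ∧
    Lp - Lm = -α * ψ a)

namespace IsDeltaEigenfunction

variable {α a κ : ℝ} {ψ : ℝ → ℝ}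

lemma exists_eqOn_expComb_Ioo_Ioi (ha : 0 < a) (hκ : 0 < κ)
    (hψ : IsDeltaEigenfunction α a κ ψ) :
    ∃ p q, EqOn ψ (expComb κ p (-p)) (Ioo 0 a) ∧ EqOn ψ (expComb κ 0 q) (Ioi a) := by
  obtain ⟨-, hcont, hψ0, ⟨C, hC⟩, hode, -⟩ := hψ
  obtain ⟨p₁, p₂, hp⟩ := exists_eqOn_expComb hκ.ne' isOpen_Ioo isPreconnected_Ioo
    fun x hx => hode x hx.1 hx.2.ne
  obtain ⟨q₁, q₂, hq⟩ := exists_eqOn_expComb hκ.ne' isOpen_Ioi isPreconnected_Ioi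
    fun x hx => hode x (ha.trans hx) hx.ne'
  have hq₁ : q₁ = 0 := eq_zero_of_eventually_abs_expComb_le hκ <|
    (eventually_gt_atTop a).mono fun x hx => hq hx ▸ hC x (ha.trans hx).le
  have hdirichlet : ψ 0 = expComb κ p₁ p₂ 0 := tendsto_nhds_unique
    ((hcont 0 self_mem_Ici).tendsto.mono_left (nhdsWithin_mono _ Ioi_subset_Ici_self))
    (tendsto_of_eqOn_of_continuousAt nhdsWithin_le_nhds (Ioo_mem_nhdsGT ha) hp
      (continuous_expComb _ _ _).continuousAt)
  simp only [expComb, hψ0, mul_zero, exp_zero, mul_one] at hdirichlet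
  obtain rfl : p₂ = -p₁ := by linarith
  exact ⟨p₁, q₂, hp, hq₁ ▸ hq⟩

lemma secular (ha : 0 < a) (hκ : 0 < κ) (hψ : IsDeltaEigenfunction α a κ ψ) :
    2 * κ * exp (κ * a) = α * (exp (κ * a) - exp (-κ * a)) := by
  obtain ⟨p, q, hp, hq⟩ := hψ.exists_eqOn_expComb_Ioo_Ioi ha hκ
  obtain ⟨⟨x₀, hx₀, hψx₀⟩, hcont, hψ0, -, -, Lp, Lm, hLp, hLm, hjump⟩ := hψ
  have hca : ContinuousAt ψ a := hcont.continuousAt (Ici_mem_nhds ha)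
  have hleft : ψ a = expComb κ p (-p) a := tendsto_nhds_unique
    (hca.tendsto.mono_left nhdsWithin_le_nhds)
    (tendsto_of_eqOn_of_continuousAt nhdsWithin_le_nhds (Ioo_mem_nhdsLT ha) hp
      (continuous_expComb _ _ _).continuousAt)
  have hright : ψ a = expComb κ 0 q a := tendsto_nhds_unique
    (hca.tendsto.mono_left nhdsWithin_le_nhds)
    (tendsto_of_eqOn_of_continuousAt nhdsWithin_le_nhds self_mem_nhdsWithin hq
      (continuous_expComb _ _ _).continuousAt)
  have hLm' := tendsto_nhds_unique hLm
    (tendsto_deriv_of_eqOn_expComb nhdsWithin_le_nhds isOpen_Ioo (Ioo_mem_nhdsLT ha) hp)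
  have hLp' := tendsto_nhds_unique hLp
    (tendsto_deriv_of_eqOn_expComb nhdsWithin_le_nhds isOpen_Ioi self_mem_nhdsWithin hq)
  have hp0 : p ≠ 0 := by
    rintro rfl
    have hq0 : q = 0 := by simpa [expComb, hleft] using hright
    apply hψx₀
    rcases hx₀.eq_or_lt with rfl | hx₀
    · exact hψ0
    rcases lt_trichotomy x₀ a with h | rfl | h
    · simpa [expComb] using hp ⟨hx₀, h⟩
    · simpa [expComb] using hleft
    · simpa [expComb, hq0] using hq h
  simp only [expComb] at hleft hright hLm' hLp'
  refine mul_left_cancel₀ hp0 ?_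
  linear_combination -hjump + hLp' - hLm' + κ * hright + (α - κ) * hleft

end IsDeltaEigenfunction

lemma secular_iff (α κ a : ℝ) :
    α / 2 * exp (-2 * κ * a) = α / 2 - κ ↔
      2 * κ * exp (κ * a) = α * (exp (κ * a) - exp (-κ * a)) := by
  have hinv : exp (κ * a) * exp (-κ * a) = 1 := by rw [← exp_add]; simp
  have hsq : exp (-2 * κ * a) = exp (-κ * a) * exp (-κ * a) := by rw [← exp_add]; ring_nf
  rw [hsq]
  constructor <;> intro h
  · linear_combination 2 * exp (κ * a) * h - α * exp (-κ * a) * hinv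
  · linear_combination exp (-κ * a) / 2 * h + (α / 2 - κ) * hinv

lemma one_lt_mul_of_secular {α κ a : ℝ} (ha : 0 < a) (hκ : 0 < κ)
    (h : α / 2 * exp (-2 * κ * a) = α / 2 - κ) : 1 < α * a := by
  have hlt : 1 - exp (-2 * κ * a) < 2 * κ * a := by
    linarith [add_one_lt_exp (x := -2 * κ * a) (by nlinarith)]
  have hpos : 0 < 1 - exp (-2 * κ * a) := by
    linarith [exp_lt_one_iff.2 (by nlinarith : -2 * κ * a < 0)]
  nlinarith

noncomputable def deltaBoundState (κ a x : ℝ) : ℝ :=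
  if x ≤ a then expComb κ 1 (-1) x else expComb κ 0 (exp (2 * κ * a) - 1) x

lemma isDeltaEigenfunction_deltaBoundState {α a κ : ℝ} (ha : 0 < a) (hκ : 0 < κ)
    (h : 2 * κ * exp (κ * a) = α * (exp (κ * a) - exp (-κ * a))) :
    IsDeltaEigenfunction α a κ (deltaBoundState κ a) := by
  set B := exp (2 * κ * a) - 1
  have hle : EqOn (deltaBoundState κ a) (expComb κ 1 (-1)) (Iic a) := fun x hx => if_pos hx
  have hgt : EqOn (deltaBoundState κ a) (expComb κ 0 B) (Ioi a) :=
    fun x hx => if_neg (not_le.2 hx)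
  have hBF : B * exp (-κ * a) = exp (κ * a) - exp (-κ * a) := by
    simp only [B, sub_mul, one_mul, ← exp_add]
    ring_nf
  have hmatch : expComb κ 1 (-1) a = expComb κ 0 B a := by
    simp only [expComb]
    linear_combination -hBF
  have hcont : Continuous (deltaBoundState κ a) :=
    Continuous.if_le (continuous_expComb _ _ _) (continuous_expComb _ _ _) continuous_id
      continuous_const fun x hx => by rw [hx]; exact hmatch
  refine ⟨⟨a, ha.le, ?_⟩, hcont.continuousOn, ?_, ⟨exp (κ * a) + 1 + |B|, ?_⟩, ?_, _, _,
    tendsto_deriv_of_eqOn_expComb nhdsWithin_le_nhds isOpen_Ioi self_mem_nhdsWithin hgt,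
    tendsto_deriv_of_eqOn_expComb nhdsWithin_le_nhds isOpen_Iio self_mem_nhdsWithin
      (hle.mono Iio_subset_Iic_self), ?_⟩
  · rw [hle self_mem_Iic, expComb]
    have : exp (-κ * a) < exp (κ * a) := exp_lt_exp.2 (by nlinarith)
    linarith
  · rw [hle ha.le, expComb]
    simp
  · intro x hx
    have hdecay : exp (-κ * x) ≤ 1 := exp_le_one_iff.2 (by nlinarith)
    rcases le_or_gt x a with hxa | hxa
    · have hgrow : exp (κ * x) ≤ exp (κ * a) := exp_le_exp.2 (by nlinarith)
      rw [hle hxa, expComb, abs_le]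
      constructor <;> linarith [exp_pos (κ * x), exp_pos (-κ * x), abs_nonneg B]
    · rw [hgt hxa, expComb, zero_mul, zero_add, abs_mul, abs_of_pos (exp_pos _)]
      nlinarith [exp_pos (κ * a), abs_nonneg B]
  · intro x hx hxa
    rcases hxa.lt_or_gt with hxa | hxa
    · exact eventuallyEq_expComb_solves (hle.eventuallyEq_of_mem (Iic_mem_nhds hxa))
    · exact eventuallyEq_expComb_solves (hgt.eventuallyEq_of_mem (Ioi_mem_nhds hxa))
  · rw [hle self_mem_Iic]
    simp only [expComb]
    linear_combination -κ * hBF - h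

theorem halfline_delta_eigenvalue_general
    (α a κ : ℝ) (ha : 0 < a) (hκ : 0 < κ) :
    (∃ ψ : ℝ → ℝ,
      (∃ x : ℝ, 0 ≤ x ∧ ψ x ≠ 0) ∧
      ContinuousOn ψ (Set.Ici 0) ∧
      ψ 0 = 0 ∧
      (∃ C : ℝ, ∀ x : ℝ, 0 ≤ x → |ψ x| ≤ C) ∧
      (∀ x : ℝ, 0 < x → x ≠ a →
        DifferentiableAt ℝ ψ x ∧ DifferentiableAt ℝ (deriv ψ) x ∧
        deriv (deriv ψ) x = κ ^ 2 * ψ x) ∧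
      (∃ Lp Lm : ℝ,
        Tendsto (deriv ψ) (𝓝[>] a) (𝓝 Lp) ∧
        Tendsto (deriv ψ) (𝓝[<] a) (𝓝 Lm) ∧
        Lp - Lm = -α * ψ a))
    ↔ (1 < α * a ∧ (α / 2) * Real.exp (-2 * κ * a) = α / 2 - κ) := by
  constructor
  · rintro ⟨ψ, hψ⟩
    have h := (secular_iff α κ a).2 (IsDeltaEigenfunction.secular ha hκ hψ)
    exact ⟨one_lt_mul_of_secular ha hκ h, h⟩
  · rintro ⟨-, h⟩
    exact ⟨deltaBoundState κ a,
      isDeltaEigenfunction_deltaBoundState ha hκ ((secular_iff α κ a).1 h)⟩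

/-- the half-line Schrödinger operator with Dirichlet condition
at `0` and one attractive delta interaction of strength `α` at `a` has `−κ²`
as an eigenvalue if and only if `αa > 1` and `(α/2)·exp(−2κa) = α/2 − κ`. -/
theorem halfline_delta_eigenvalue
    (α a κ : ℝ) (hα : 0 < α) (ha : 0 < a) (hκ : 0 < κ) :
    (∃ ψ : ℝ → ℝ,
      (∃ x : ℝ, 0 ≤ x ∧ ψ x ≠ 0) ∧
      ContinuousOn ψ (Set.Ici 0) ∧
      ψ 0 = 0 ∧
      (∃ C : ℝ, ∀ x : ℝ, 0 ≤ x → |ψ x| ≤ C) ∧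
      (∀ x : ℝ, 0 < x → x ≠ a →
        DifferentiableAt ℝ ψ x ∧ DifferentiableAt ℝ (deriv ψ) x ∧
        deriv (deriv ψ) x = κ ^ 2 * ψ x) ∧
      (∃ Lp Lm : ℝ,
        Tendsto (deriv ψ) (𝓝[>] a) (𝓝 Lp) ∧
        Tendsto (deriv ψ) (𝓝[<] a) (𝓝 Lm) ∧
        Lp - Lm = -α * ψ a))
    ↔ (1 < α * a ∧ (α / 2) * Real.exp (-2 * κ * a) = α / 2 - κ) :=
  halfline_delta_eigenvalue_general α a κ ha hκ
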